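/- Let α : I → ℝ³ be a unit-speed curve lying on the unit sphere, with curvature κ(s) = ‖α''(s)‖ > 0 and torsion τ(s). Then there exists θ₀ ∈ ℝ such that 1/κ(s) = cos( ∫₀ˢ τ(u) du + θ₀ ) for all s ∈ I. -/

import Mathlib

open scoped RealInnerProductSpace

noncomputable def det3 (a b c : EuclideanSpace ℝ (Fin 3)) : ℝ :=
  Matrix.det (Matrix.of ![(a : Fin 3 → ℝ), b, c])

lemma det3_eq (a b c : EuclideanSpace ℝ (Fin 3)) :
    det3 a b c = a 0 * b 1 * c 2 - a 0 * b 2 * c 1 - a 1 * b 0 * c 2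
      + a 1 * b 2 * c 0 + a 2 * b 0 * c 1 - a 2 * b 1 * c 0 := by
  simp [det3, Matrix.det_fin_three]

lemma inner3 (x y : EuclideanSpace ℝ (Fin 3)) :
    ⟪x, y⟫ = x 0 * y 0 + x 1 * y 1 + x 2 * y 2 := by
  simp [PiLp.inner_apply, Fin.sum_univ_three]; ring

lemma gram_mul (a b c d e f : EuclideanSpace ℝ (Fin 3)) :
    det3 a b c * det3 d e f =
      ⟪a,d⟫*⟪b,e⟫*⟪c,f⟫ - ⟪a,d⟫*⟪b,f⟫*⟪c,e⟫ - ⟪a,e⟫*⟪b,d⟫*⟪c,f⟫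
      + ⟪a,e⟫*⟪b,f⟫*⟪c,d⟫ + ⟪a,f⟫*⟪b,d⟫*⟪c,e⟫ - ⟪a,f⟫*⟪b,e⟫*⟪c,d⟫ := by
  simp only [det3_eq, inner3]; ring

lemma four_dep (p t n w : EuclideanSpace ℝ (Fin 3)) :
    det3 t n w * ⟪p,n⟫ - det3 p n w * ⟪t,n⟫ + det3 p t w * ⟪n,n⟫ - det3 p t n * ⟪w,n⟫ = 0 := by
  simp only [det3_eq, inner3]; ring

lemma det3_aab (a b : EuclideanSpace ℝ (Fin 3)) : det3 a a b = 0 := by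
  simp only [det3_eq]; ring

lemma det3_abb (a b : EuclideanSpace ℝ (Fin 3)) : det3 a b b = 0 := by
  simp only [det3_eq]; ring

lemma det3_swap12 (a b c : EuclideanSpace ℝ (Fin 3)) : det3 a b c = - det3 b a c := by
  simp only [det3_eq]; ring

lemma det3_neg2 (a b c : EuclideanSpace ℝ (Fin 3)) : det3 a (-b) c = - det3 a b c := by
  simp only [det3_eq, PiLp.neg_apply]; ring

lemma coordD {f : ℝ → EuclideanSpace ℝ (Fin 3)} {f' : EuclideanSpace ℝ (Fin 3)} {x : ℝ}
    (hf : HasDerivAt f f' x) (i : Fin 3) :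
    HasDerivAt (fun s => f s i) (f' i) x := by
  exact (EuclideanSpace.proj i).hasFDerivAt.comp_hasDerivAt x hf

lemma coordC {f : ℝ → EuclideanSpace ℝ (Fin 3)} (hf : Continuous f) (i : Fin 3) :
    Continuous (fun s => f s i) := (EuclideanSpace.proj i).continuous.comp hf

lemma hasDerivAt_det3 {f g h : ℝ → EuclideanSpace ℝ (Fin 3)}
    {f' g' h' : EuclideanSpace ℝ (Fin 3)} {x : ℝ}
    (hf : HasDerivAt f f' x) (hg : HasDerivAt g g' x) (hh : HasDerivAt h h' x) :
    HasDerivAt (fun s => det3 (f s) (g s) (h s))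
      (det3 f' (g x) (h x) + det3 (f x) g' (h x) + det3 (f x) (g x) h') x := by
  simp only [det3_eq]
  have H := ((((((coordD hf 0).mul (coordD hg 1)).mul (coordD hh 2)).sub
      (((coordD hf 0).mul (coordD hg 2)).mul (coordD hh 1))).sub
      (((coordD hf 1).mul (coordD hg 0)).mul (coordD hh 2))).add
      (((coordD hf 1).mul (coordD hg 2)).mul (coordD hh 0))).add
      ((((coordD hf 2).mul (coordD hg 0)).mul (coordD hh 1)).sub
      (((coordD hf 2).mul (coordD hg 1)).mul (coordD hh 0)))
  convert H using 1
  · rfl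
  · rfl
  · funext s; simp only [Pi.mul_apply, Pi.sub_apply, Pi.add_apply]; ring
  · simp only [Pi.mul_apply]; ring

lemma continuous_det3 {f g h : ℝ → EuclideanSpace ℝ (Fin 3)}
    (hf : Continuous f) (hg : Continuous g) (hh : Continuous h) :
    Continuous (fun s => det3 (f s) (g s) (h s)) := by
  simp only [det3_eq]
  exact (((((((coordC hf 0).mul (coordC hg 1)).mul (coordC hh 2)).sub
      (((coordC hf 0).mul (coordC hg 2)).mul (coordC hh 1))).sub
      (((coordC hf 1).mul (coordC hg 0)).mul (coordC hh 2))).add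
      (((coordC hf 1).mul (coordC hg 2)).mul (coordC hh 0))).add
      (((coordC hf 2).mul (coordC hg 0)).mul (coordC hh 1))).sub
      (((coordC hf 2).mul (coordC hg 1)).mul (coordC hh 0))

lemma normD {f : ℝ → EuclideanSpace ℝ (Fin 3)} {f' : EuclideanSpace ℝ (Fin 3)} {x : ℝ}
    (hf : HasDerivAt f f' x) (hpos : 0 < ‖f x‖) :
    HasDerivAt (fun s => ‖f s‖) (⟪f x, f'⟫ / ‖f x‖) x := by
  have h1 : HasDerivAt (fun s => ⟪f s, f s⟫) (⟪f x, f'⟫ + ⟪f', f x⟫) x := hf.inner ℝ hf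
  have h2 : ⟪f x, f x⟫ ≠ 0 := by
    have : (0:ℝ) < ⟪f x, f x⟫ := by rw [real_inner_self_eq_norm_sq]; positivity
    linarith
  have h3 := h1.sqrt h2
  have h4 : (fun s => Real.sqrt ⟪f s, f s⟫) = fun s => ‖f s‖ := by
    funext s; rw [real_inner_self_eq_norm_sq, Real.sqrt_sq (norm_nonneg _)]
  rw [h4] at h3
  convert h3 using 1
  rw [real_inner_self_eq_norm_sq, real_inner_comm f' (f x), Real.sqrt_sq (norm_nonneg _)]
  have : ‖f x‖ ≠ 0 := ne_of_gt hpos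
  field_simp
  ring

lemma deriv_zero_of_const {f : ℝ → ℝ} {c : ℝ} {U : Set ℝ} (hU : IsOpen U) {x : ℝ} (hx : x ∈ U)
    (hc : ∀ y ∈ U, f y = c) {d : ℝ} (hd : HasDerivAt f d x) : d = 0 := by
  have h1 : f =ᶠ[nhds x] fun _ => c := Filter.eventually_of_mem (hU.mem_nhds hx) hc
  have h2 : HasDerivAt f 0 x := (hasDerivAt_const x c).congr_of_eventuallyEq h1
  exact hd.unique h2

lemma const_of_hasDerivAt_zero {f : ℝ → ℝ} {a b : ℝ}
    (hf : ∀ x ∈ Set.Ioo a b, HasDerivAt f 0 x) {x y : ℝ}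
    (hx : x ∈ Set.Ioo a b) (hy : y ∈ Set.Ioo a b) : f x = f y := by
  apply (convex_Ioo a b).is_const_of_fderivWithin_eq_zero
    (fun z hz => (hf z hz).differentiableAt.differentiableWithinAt) ?_ hx hy
  intro z hz
  rw [fderivWithin_of_isOpen isOpen_Ioo hz, (hf z hz).hasFDerivAt.fderiv]
  ext
  simp

lemma val1 (A B X k : ℝ) (hX : X = A * B) : -(A/k^2 * (B/k)) = -(X/k)/k^2 := by
  subst hX; ring

lemma val2 (A B P X k : ℝ) (hk : k ≠ 0) (h7 : k^2*P - B*X = A) :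
    A/k^2 * k⁻¹ = (P*k - B*(X/k))/k^2 := by
  subst h7; field_simp

set_option maxHeartbeats 1000000 in
theorem stmt_3 (a b : ℝ) (ha : a < 0) (hb : 0 < b)
    (α : ℝ → EuclideanSpace ℝ (Fin 3)) (κ τ : ℝ → ℝ)
    (hα : ContDiff ℝ (⊤ : ℕ∞) α)
    (hunit : ∀ s ∈ Set.Ioo a b, ‖deriv α s‖ = 1)
    (hsph : ∀ s ∈ Set.Ioo a b, ‖α s‖ = 1)
    (hκ : ∀ s, κ s = ‖deriv (deriv α) s‖)
    (hκpos : ∀ s ∈ Set.Ioo a b, 0 < κ s)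
    (hτ : ∀ s, τ s = det3 (deriv α s) (deriv (deriv α) s) (deriv (deriv (deriv α)) s) / κ s ^ 2) :
    ∃ θ₀ : ℝ, ∀ s ∈ Set.Ioo a b,
      1 / κ s = Real.cos ((∫ u in (0:ℝ)..s, τ u) + θ₀) := by
  have h0mem : (0:ℝ) ∈ Set.Ioo a b := ⟨ha, hb⟩
  have hc0 : ContDiff ℝ (⊤:ℕ∞) α := hα.of_le (by simp)
  have hc1 : ContDiff ℝ (⊤:ℕ∞) (deriv α) := (contDiff_infty_iff_deriv.mp hc0).2
  have hc2 : ContDiff ℝ (⊤:ℕ∞) (deriv (deriv α)) := (contDiff_infty_iff_deriv.mp hc1).2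
  have hc3 : ContDiff ℝ (⊤:ℕ∞) (deriv (deriv (deriv α))) := (contDiff_infty_iff_deriv.mp hc2).2
  have hone : (1:ℕ∞) ≤ (⊤:ℕ∞) := le_top
  have hdα : ∀ x, HasDerivAt α (deriv α x) x := fun x =>
    (hc0.differentiable (by simp) x).hasDerivAt
  have hdT : ∀ x, HasDerivAt (deriv α) (deriv (deriv α) x) x := fun x =>
    (hc1.differentiable (by simp) x).hasDerivAt
  have hdN : ∀ x, HasDerivAt (deriv (deriv α)) (deriv (deriv (deriv α)) x) x := fun x =>
    (hc2.differentiable (by simp) x).hasDerivAt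
  set T := deriv α with hTdef
  set N := deriv (deriv α) with hNdef
  set W := deriv (deriv (deriv α)) with hWdef
  -- basic scalar identities
  have c0 : ∀ s ∈ Set.Ioo a b, ⟪α s, α s⟫ = 1 := by
    intro s hs; rw [real_inner_self_eq_norm_sq, hsph s hs]; norm_num
  have c1 : ∀ s ∈ Set.Ioo a b, ⟪T s, T s⟫ = 1 := by
    intro s hs; rw [real_inner_self_eq_norm_sq, hunit s hs]; norm_num
  have c2 : ∀ s ∈ Set.Ioo a b, ⟪α s, T s⟫ = 0 := by
    intro s hs
    have hD : HasDerivAt (fun t => ⟪α t, α t⟫) (⟪α s, T s⟫ + ⟪T s, α s⟫) s :=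
      (hdα s).inner ℝ (hdα s)
    have hz := deriv_zero_of_const isOpen_Ioo hs c0 hD
    have hcomm := real_inner_comm (α s) (T s)
    linarith
  have c3 : ∀ s ∈ Set.Ioo a b, ⟪T s, N s⟫ = 0 := by
    intro s hs
    have hD : HasDerivAt (fun t => ⟪T t, T t⟫) (⟪T s, N s⟫ + ⟪N s, T s⟫) s :=
      (hdT s).inner ℝ (hdT s)
    have hz := deriv_zero_of_const isOpen_Ioo hs c1 hD
    have hcomm := real_inner_comm (T s) (N s)
    linarith
  have c4 : ∀ s ∈ Set.Ioo a b, ⟪α s, N s⟫ = -1 := by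
    intro s hs
    have hD : HasDerivAt (fun t => ⟪α t, T t⟫) (⟪α s, N s⟫ + ⟪T s, T s⟫) s :=
      (hdα s).inner ℝ (hdT s)
    have hz := deriv_zero_of_const isOpen_Ioo hs c2 hD
    have := c1 s hs
    linarith
  have c5 : ∀ s ∈ Set.Ioo a b, ⟪α s, W s⟫ = 0 := by
    intro s hs
    have hD : HasDerivAt (fun t => ⟪α t, N t⟫) (⟪α s, W s⟫ + ⟪T s, N s⟫) s :=
      (hdα s).inner ℝ (hdN s)
    have hz := deriv_zero_of_const isOpen_Ioo hs c4 hD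
    have := c3 s hs
    linarith
  have cNN : ∀ s, ⟪N s, N s⟫ = κ s ^ 2 := by
    intro s; rw [real_inner_self_eq_norm_sq, hκ s]
  have c6 : ∀ s ∈ Set.Ioo a b, ⟪T s, W s⟫ = -(κ s ^ 2) := by
    intro s hs
    have hD : HasDerivAt (fun t => ⟪T t, N t⟫) (⟪T s, W s⟫ + ⟪N s, N s⟫) s :=
      (hdT s).inner ℝ (hdN s)
    have hz := deriv_zero_of_const isOpen_Ioo hs c3 hD
    have := cNN s
    linarith
  -- Gram determinant identities
  have g1 : ∀ s ∈ Set.Ioo a b,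
      ⟪N s, W s⟫ = det3 (T s) (N s) (W s) * det3 (α s) (T s) (N s) := by
    intro s hs
    have h := gram_mul (T s) (N s) (W s) (α s) (T s) (N s)
    rw [real_inner_comm (α s) (T s), c2 s hs, c1 s hs, c3 s hs,
      real_inner_comm (α s) (N s), c4 s hs, real_inner_comm (T s) (N s), c3 s hs, cNN s,
      real_inner_comm (α s) (W s), c5 s hs, real_inner_comm (T s) (W s), c6 s hs,
      real_inner_comm (N s) (W s)] at h
    linear_combination -h
  have g2 : ∀ s ∈ Set.Ioo a b,
      det3 (α s) (T s) (N s) * det3 (α s) (T s) (N s) = κ s ^ 2 - 1 := by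
    intro s hs
    have h := gram_mul (α s) (T s) (N s) (α s) (T s) (N s)
    rw [c0 s hs, c2 s hs, c4 s hs, real_inner_comm (α s) (T s), c2 s hs, c1 s hs, c3 s hs,
      real_inner_comm (α s) (N s), c4 s hs, real_inner_comm (T s) (N s), c3 s hs, cNN s] at h
    linear_combination h
  have c7 : ∀ s ∈ Set.Ioo a b,
      κ s ^ 2 * det3 (α s) (T s) (W s) - det3 (α s) (T s) (N s) * ⟪N s, W s⟫
        = det3 (T s) (N s) (W s) := by
    intro s hs
    by_cases hD : det3 (α s) (T s) (N s) = 0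
    · -- degenerate case: N s = - α s and κ s ^ 2 = 1
      have hκ1 : κ s ^ 2 = 1 := by
        have := g2 s hs; rw [hD] at this; linarith
      have hNα : N s = -α s := by
        have hz : ⟪N s + α s, N s + α s⟫ = 0 := by
          rw [real_inner_add_add_self, cNN s, real_inner_comm (α s) (N s), c4 s hs, c0 s hs]
          linarith
        have h0 : N s + α s = 0 := inner_self_eq_zero.mp hz
        exact eq_neg_of_add_eq_zero_left h0
      rw [hD, hκ1, hNα, det3_neg2, det3_swap12 (T s) (α s) (W s)]
      ring
    · have h := four_dep (α s) (T s) (N s) (W s)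
      rw [c4 s hs, c3 s hs, cNN s, real_inner_comm (N s) (W s)] at h
      have h2 : det3 (α s) (T s) (N s) *
          (κ s ^ 2 * det3 (α s) (T s) (W s) - det3 (α s) (T s) (N s) * ⟪N s, W s⟫
            - det3 (T s) (N s) (W s)) = 0 := by linear_combination det3 (α s) (T s) (N s) * h
      have := mul_eq_zero.mp h2
      rcases this with h3 | h3
      · exact absurd h3 hD
      · linarith
  -- definitions
  set u : ℝ → ℝ := fun s => (κ s)⁻¹ with hudef
  set v : ℝ → ℝ := fun s => det3 (α s) (T s) (N s) / κ s with hvdef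
  set φ : ℝ → ℝ := fun s => ∫ t in (0:ℝ)..s, τ t with hφdef
  -- derivative of κ
  have hκd : ∀ s ∈ Set.Ioo a b, HasDerivAt κ (⟪N s, W s⟫ / κ s) s := by
    intro s hs
    have hp : 0 < ‖N s‖ := by rw [← hκ s]; exact hκpos s hs
    have h := normD (hdN s) hp
    have hfun : κ = fun t => ‖N t‖ := funext hκ
    rw [hfun]
    simpa using h
  -- derivative of u
  have hud : ∀ s ∈ Set.Ioo a b, HasDerivAt u (-(τ s * v s)) s := by
    intro s hs
    have hκne : κ s ≠ 0 := ne_of_gt (hκpos s hs)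
    have h := (hκd s hs).inv hκne
    convert h using 1
    rfl
    rfl
    rfl
    rw [hτ s]
    simp only [hvdef]
    exact val1 _ _ _ _ (g1 s hs)
  -- derivative of v
  have hvd : ∀ s ∈ Set.Ioo a b, HasDerivAt v (τ s * u s) s := by
    intro s hs
    have hκne : κ s ≠ 0 := ne_of_gt (hκpos s hs)
    have hV := hasDerivAt_det3 (hdα s) (hdT s) (hdN s)
    have h := hV.div (hκd s hs) hκne
    convert h using 1
    rfl
    rfl
    rfl
    rw [hτ s]
    simp only [hudef, det3_aab, det3_abb, zero_add]
    exact val2 _ _ _ _ _ hκne (c7 s hs)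
  -- continuity of τ and the FTC
  have hτcont : ContinuousOn τ (Set.Ioo a b) := by
    have hform : ContinuousOn (fun s => det3 (T s) (N s) (W s) / κ s ^ 2) (Set.Ioo a b) := by
      apply ContinuousOn.div
      · exact (continuous_det3 hc1.continuous hc2.continuous hc3.continuous).continuousOn
      · have hco : Continuous fun s => ‖N s‖ ^ 2 := (hc2.continuous.norm).pow 2
        have hfun : (fun s => κ s ^ 2) = fun s => ‖N s‖ ^ 2 := by
          funext t; rw [hκ t]
        rw [hfun]; exact hco.continuousOn
      · intro s hs
        exact pow_ne_zero 2 (ne_of_gt (hκpos s hs))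
    exact ContinuousOn.congr hform (fun s _ => hτ s)
  have hφd : ∀ s ∈ Set.Ioo a b, HasDerivAt φ (τ s) s := by
    intro s hs
    have hsub : Set.uIcc (0:ℝ) s ⊆ Set.Ioo a b :=
      (Set.ordConnected_Ioo).uIcc_subset h0mem hs
    have hint : IntervalIntegrable τ MeasureTheory.volume 0 s :=
      (hτcont.mono hsub).intervalIntegrable
    have hmeas := hτcont.stronglyMeasurableAtFilter (μ := MeasureTheory.volume) isOpen_Ioo s hs
    have hca : ContinuousAt τ s := hτcont.continuousAt (isOpen_Ioo.mem_nhds hs)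
    exact intervalIntegral.integral_hasDerivAt_right hint hmeas hca
  -- the rotated pair is constant
  set F : ℝ → ℝ := fun s => u s * Real.cos (φ s) + v s * Real.sin (φ s) with hFdef
  set G : ℝ → ℝ := fun s => v s * Real.cos (φ s) - u s * Real.sin (φ s) with hGdef
  have hFd : ∀ s ∈ Set.Ioo a b, HasDerivAt F 0 s := by
    intro s hs
    have h := ((hud s hs).mul ((hφd s hs).cos)).add ((hvd s hs).mul ((hφd s hs).sin))
    convert h using 1
    rfl
    rfl
    rfl
    ring
  have hGd : ∀ s ∈ Set.Ioo a b, HasDerivAt G 0 s := by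
    intro s hs
    have h := ((hvd s hs).mul ((hφd s hs).cos)).sub ((hud s hs).mul ((hφd s hs).sin))
    convert h using 1
    rfl
    rfl
    rfl
    ring
  have hφ0 : φ 0 = 0 := intervalIntegral.integral_same
  have hF0 : ∀ s ∈ Set.Ioo a b, F s = u 0 := by
    intro s hs
    have hcst := const_of_hasDerivAt_zero hFd hs h0mem
    rw [hcst, hFdef]
    simp [hφ0]
  have hG0 : ∀ s ∈ Set.Ioo a b, G s = v 0 := by
    intro s hs
    have hcst := const_of_hasDerivAt_zero hGd hs h0mem
    rw [hcst, hGdef]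
    simp [hφ0]
  -- initial point lies on the unit circle
  have hκ0ne : κ 0 ≠ 0 := ne_of_gt (hκpos 0 h0mem)
  have huv0 : u 0 ^ 2 + v 0 ^ 2 = 1 := by
    have h2 := g2 0 h0mem
    rw [hudef, hvdef]
    simp only
    field_simp
    linear_combination h2
  set z : ℂ := ⟨u 0, v 0⟩ with hzdef
  have hzabs : ‖z‖ = 1 := by
    rw [Complex.norm_def, hzdef, Complex.normSq_mk,
      show u 0 * u 0 + v 0 * v 0 = 1 by linear_combination huv0]
    exact Real.sqrt_one
  have hzne : z ≠ 0 := by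
    intro h; rw [h] at hzabs; simp at hzabs
  refine ⟨Complex.arg z, ?_⟩
  intro s hs
  have hcosθ : Real.cos (Complex.arg z) = u 0 := by
    rw [Complex.cos_arg hzne, hzabs]; simp [hzdef]
  have hsinθ : Real.sin (Complex.arg z) = v 0 := by
    rw [Complex.sin_arg, hzabs]; simp [hzdef]
  have hF := hF0 s hs
  have hG := hG0 s hs
  simp only [hFdef] at hF
  simp only [hGdef] at hG
  have key : u s = u 0 * Real.cos (φ s) - v 0 * Real.sin (φ s) := by
    linear_combination Real.cos (φ s) * hF - Real.sin (φ s) * hG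
      - u s * Real.sin_sq_add_cos_sq (φ s)
  have hint : (∫ t in (0:ℝ)..s, τ t) = φ s := rfl
  have h1κ : 1 / κ s = u s := (one_div (κ s)).trans rfl
  rw [hint, Real.cos_add, hcosθ, hsinθ, h1κ, key]
  ring
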